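/- For n ≥ 6, in the graph Γ_n there are exactly three 4-cycles passing through the edge from (0,1) to (0,4). -/

import Mathlib

/-!
Write `u = (0,0)`, `v = (0,3)` and `eᵢ` for the standard basis vectors. A 4-cycle through the
edge `uv` is `u b c v` with `b ~ u`, `c ~ v`, `b ~ c`, `c ≠ u`, `b ≠ v`. The neighbours of `u` are
`(eₖ,0)`, `(0,1)`, `(0,3)`; those of `v` are `(0,0)`, `(0,2)` and `(t,3)` with `t ∈ T₃₃`. Layer `1`
is not joined to layer `3`, so `b = (0,1)` forces `c = (0,2)`. Layer `0` is joined to layer `3`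
only through `T₀₃ = {0}`, so `b = (eₖ,0)` forces `c = (eₖ,3)` with `eₖ ∈ T₃₃`; as `eₖ` is not a sum
of two distinct basis vectors, `eₖ` is one of the last two basis vectors. This gives exactly
three cycles.
-/

/-- The 4-Cayley graph `Γ` of `H = (ℤ/2)^m` (with `m = n - 2`): vertices are the
four copies `H × {0,1,2,3}` of `H`, with `(h,i)` adjacent to `(g,j)` iff
`g - h ∈ T i j`, for the connection sets of Definition 3.2 of the paper
(the paper's labels `1,2,3,4` correspond to `0,1,2,3` here, and `aₖ` is the
`k`-th standard basis vector, 0-indexed). -/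
def gammaGraph (m : ℕ) (hm : 4 ≤ m) : SimpleGraph ((Fin m → ZMod 2) × Fin 4) :=
  SimpleGraph.fromRel (fun p q =>
    (p.2 = 0 ∧ q.2 = 0 ∧ ∃ i : Fin m, q.1 - p.1 = Pi.single i 1) ∨
    (p.2 = 1 ∧ q.2 = 1 ∧
      ((∃ i : Fin m, ∃ h : i.val + 3 ≤ m,
          q.1 - p.1 = Pi.single i 1 + Pi.single (⟨i.val + 2, by omega⟩ : Fin m) 1) ∨
        q.1 - p.1 = Pi.single (⟨m - 2, by omega⟩ : Fin m) 1 +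
          Pi.single (⟨m - 1, by omega⟩ : Fin m) 1)) ∨
    (p.2 = 2 ∧ q.2 = 2 ∧
      ((∃ i : Fin m, ∃ h : i.val + 3 ≤ m,
          q.1 - p.1 = Pi.single i 1 + Pi.single (⟨i.val + 1, by omega⟩ : Fin m) 1 +
            Pi.single (⟨i.val + 2, by omega⟩ : Fin m) 1) ∨
        q.1 - p.1 = Pi.single (⟨m - 2, by omega⟩ : Fin m) 1 +
          Pi.single (⟨m - 1, by omega⟩ : Fin m) 1)) ∨
    (p.2 = 3 ∧ q.2 = 3 ∧
      ((∃ i : Fin m, ∃ h : i.val + 3 ≤ m,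
          q.1 - p.1 = Pi.single i 1 + Pi.single (⟨i.val + 1, by omega⟩ : Fin m) 1) ∨
        q.1 - p.1 = Pi.single (⟨m - 2, by omega⟩ : Fin m) 1 ∨
        q.1 - p.1 = Pi.single (⟨m - 1, by omega⟩ : Fin m) 1)) ∨
    (p.2 = 0 ∧ q.2 = 1 ∧ q.1 = p.1) ∨
    (p.2 = 0 ∧ q.2 = 3 ∧ q.1 = p.1) ∨
    (p.2 = 2 ∧ q.2 = 3 ∧ q.1 = p.1) ∨
    (p.2 = 1 ∧ q.2 = 2 ∧
      (q.1 = p.1 ∨ q.1 - p.1 = Pi.single (⟨m - 1, by omega⟩ : Fin m) 1)))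

/-- `C` is (the edge set of) a 4-cycle in the graph `G`: there are four distinct
vertices `a, b, c, d`, consecutively adjacent, whose four cycle edges make up `C`. -/
def IsFourCycle {V : Type*} (G : SimpleGraph V) (C : Set (Sym2 V)) : Prop :=
  ∃ a b c d : V, a ≠ b ∧ a ≠ c ∧ a ≠ d ∧ b ≠ c ∧ b ≠ d ∧ c ≠ d ∧
    G.Adj a b ∧ G.Adj b c ∧ G.Adj c d ∧ G.Adj d a ∧
    C = {s(a, b), s(b, c), s(c, d), s(d, a)}

namespace Pi
variable {ι M : Type*} [DecidableEq ι] [AddZeroClass M] {x : M} {i j k : ι}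

theorem single_add_single_ne_zero (hij : i ≠ j) (hx : x ≠ 0) :
    (single i x + single j x : ι → M) ≠ 0 := fun h ↦ by
  simpa [hij.symm, hx] using congrFun h i

theorem single_ne_single_add_single (hij : i ≠ j) (hx : x ≠ 0) :
    (single k x : ι → M) ≠ single i x + single j x := fun h ↦ by
  have hik : i = k := by simpa [single_apply, hij, hx.symm] using congrFun h i
  have hjk : j = k := by simpa [single_apply, hij.symm, hx.symm] using congrFun h j
  exact hij (hik.trans hjk.symm)

theorem single_ne_single (hij : i ≠ j) (hx : x ≠ 0) : (single i x : ι → M) ≠ single j x :=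
  fun h ↦ by simpa [hij, hx] using congrFun h i

end Pi

section FourCycle
variable {V : Type*} {G : SimpleGraph V} {a b c d : V}

def cycleEdges (a b c d : V) : Set (Sym2 V) :=
  {s(a, b), s(b, c), s(c, d), s(d, a)}

theorem mk_mem_cycleEdges_first : s(a, b) ∈ cycleEdges a b c d :=
  Set.mem_insert _ _

theorem mk_mem_cycleEdges_last : s(a, d) ∈ cycleEdges a b c d := by
  simp [cycleEdges, Sym2.eq_swap]

theorem isFourCycle_cycleEdges (hac : a ≠ c) (hbd : b ≠ d) (hab : G.Adj a b) (hbc : G.Adj b c)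
    (hcd : G.Adj c d) (hda : G.Adj d a) : IsFourCycle G (cycleEdges a b c d) :=
  ⟨a, b, c, d, hab.ne, hac, hda.ne.symm, hbc.ne, hbd, hcd.ne, hab, hbc, hcd, hda, rfl⟩

theorem IsFourCycle.exists_eq_cycleEdges_of_mem {C : Set (Sym2 V)} (h : IsFourCycle G C)
    {u v : V} (huv : s(u, v) ∈ C) :
    ∃ b c, u ≠ c ∧ b ≠ v ∧ G.Adj u b ∧ G.Adj b c ∧ G.Adj c v ∧
      C = cycleEdges u b c v := by
  obtain ⟨a, b, c, d, hab, hac, had, hbc, hbd, hcd, hab', hbc', hcd', hda', rfl⟩ := h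
  simp only [Set.mem_insert_iff, Set.mem_singleton_iff, Sym2.eq_iff] at huv
  -- `b` is the other neighbour of `u` on the square and `c` the vertex opposite to `u`
  rcases huv with (⟨rfl, rfl⟩ | ⟨rfl, rfl⟩) | (⟨rfl, rfl⟩ | ⟨rfl, rfl⟩) |
    (⟨rfl, rfl⟩ | ⟨rfl, rfl⟩) | (⟨rfl, rfl⟩ | ⟨rfl, rfl⟩) <;>
  [refine ⟨d, c, ?_⟩; refine ⟨c, d, ?_⟩; refine ⟨a, d, ?_⟩; refine ⟨d, a, ?_⟩;
    refine ⟨b, a, ?_⟩; refine ⟨a, b, ?_⟩; refine ⟨c, b, ?_⟩; refine ⟨b, c, ?_⟩] <;>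
  refine ⟨?_, ?_, ?_, ?_, ?_, ?_⟩ <;>
  first
    | assumption | exact Ne.symm ‹_› | (rw [G.adj_comm]; assumption)
    | (ext; simp only [cycleEdges, Set.mem_insert_iff, Set.mem_singleton_iff, Sym2.eq_swap] <;>
        tauto)

end FourCycle

section gammaGraph
variable {m : ℕ} (hm : 4 ≤ m)

theorem gammaGraph_adj_layer03_iff (x y : Fin m → ZMod 2) :
    (gammaGraph m hm).Adj (x, 0) (y, 3) ↔ x = y := by
  simp [gammaGraph, Prod.ext_iff, eq_comm]

theorem gammaGraph_adj_layer12_self (x : Fin m → ZMod 2) :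
    (gammaGraph m hm).Adj (x, 1) (x, 2) := by
  simp [gammaGraph]

theorem gammaGraph_not_adj_layer02 (x y : Fin m → ZMod 2) :
    ¬(gammaGraph m hm).Adj (x, 0) (y, 2) := by
  simp [gammaGraph]

theorem gammaGraph_not_adj_layer13 (x y : Fin m → ZMod 2) :
    ¬(gammaGraph m hm).Adj (x, 1) (y, 3) := by
  simp [gammaGraph]

theorem gammaGraph_adj_zero_zero_iff (q : (Fin m → ZMod 2) × Fin 4) :
    (gammaGraph m hm).Adj (0, 0) q ↔
      (∃ i, q = (Pi.single i 1, 0)) ∨ q = (0, 1) ∨ q = (0, 3) := by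
  obtain ⟨y, j⟩ := q
  fin_cases j <;> simp [gammaGraph, ZModModule.neg_eq_self, Prod.ext_iff, eq_comm]
  rintro i rfl
  simp

theorem gammaGraph_adj_zero_three_iff (q : (Fin m → ZMod 2) × Fin 4) :
    (gammaGraph m hm).Adj q (0, 3) ↔
      q = (0, 0) ∨ q = (0, 2) ∨
        (∃ i : Fin m, ∃ hi : i.val + 3 ≤ m,
          q = (Pi.single i 1 + Pi.single (⟨i.val + 1, by omega⟩ : Fin m) 1, 3)) ∨
        q = (Pi.single (⟨m - 2, by omega⟩ : Fin m) 1, 3) ∨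
        q = (Pi.single (⟨m - 1, by omega⟩ : Fin m) 1, 3) := by
  obtain ⟨y, j⟩ := q
  fin_cases j <;> simp [gammaGraph, ZModModule.neg_eq_self, Prod.ext_iff, eq_comm]
  rintro (⟨i, -, rfl⟩ | rfl | rfl)
  · exact Pi.single_add_single_ne_zero (by simp [Fin.ext_iff]) one_ne_zero
  all_goals simp

theorem setOf_isFourCycle_gammaGraph_and_mem :
    {C | IsFourCycle (gammaGraph m hm) C ∧
        s(((0 : Fin m → ZMod 2), (0 : Fin 4)), (0, 3)) ∈ C} =
      {cycleEdges (0, 0) (0, 1) (0, 2) (0, 3),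
        cycleEdges (0, 0) (Pi.single ⟨m - 2, by omega⟩ 1, 0)
          (Pi.single ⟨m - 2, by omega⟩ 1, 3) (0, 3),
        cycleEdges (0, 0) (Pi.single ⟨m - 1, by omega⟩ 1, 0)
          (Pi.single ⟨m - 1, by omega⟩ 1, 3) (0, 3)} := by
  ext C
  simp only [Set.mem_ofPred_eq, Set.mem_insert_iff, Set.mem_singleton_iff]
  constructor
  · rintro ⟨hC, hmem⟩
    obtain ⟨b, c, huc, hbv, hub, hbc, hcv, rfl⟩ := hC.exists_eq_cycleEdges_of_mem hmem
    rcases (gammaGraph_adj_zero_zero_iff hm b).mp hub with ⟨k, rfl⟩ | rfl | rfl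
    · rcases (gammaGraph_adj_zero_three_iff hm c).mp hcv with
        rfl | rfl | ⟨i, hi, rfl⟩ | rfl | rfl
      · exact absurd rfl huc
      · exact absurd hbc (gammaGraph_not_adj_layer02 hm _ _)
      · exact absurd ((gammaGraph_adj_layer03_iff hm _ _).mp hbc)
          (Pi.single_ne_single_add_single (by simp [Fin.ext_iff]) one_ne_zero)
      · rw [(gammaGraph_adj_layer03_iff hm _ _).mp hbc]
        exact Or.inr (Or.inl rfl)
      · rw [(gammaGraph_adj_layer03_iff hm _ _).mp hbc]
        exact Or.inr (Or.inr rfl)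
    · rcases (gammaGraph_adj_zero_three_iff hm c).mp hcv with
        rfl | rfl | ⟨_, _, rfl⟩ | rfl | rfl
      · exact absurd rfl huc
      · exact Or.inl rfl
      all_goals exact absurd hbc (gammaGraph_not_adj_layer13 hm _ _)
    · exact absurd rfl hbv
  · have hvu : (gammaGraph m hm).Adj (0, 3) (0, 0) :=
      ((gammaGraph_adj_zero_zero_iff hm _).mpr (by simp)).symm
    rintro (rfl | rfl | rfl) <;>
      refine ⟨isFourCycle_cycleEdges (by simp) (by simp) ?_ ?_ ?_ hvu,
        mk_mem_cycleEdges_last⟩ <;>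
      simp [gammaGraph_adj_zero_zero_iff, gammaGraph_adj_zero_three_iff,
        gammaGraph_adj_layer03_iff, gammaGraph_adj_layer12_self] <;>
      exact ⟨_, rfl⟩

end gammaGraph

/-- For `n ≥ 6`, there are exactly three 4-cycles of `Γ_n` through the edge from
`(0,1)` to `(0,4)` (labels `(0,0)`–`(0,3)` here). -/
theorem gamma_fourCycles_through_edge_14 (n : ℕ) (hn : 6 ≤ n) :
    {C : Set (Sym2 ((Fin (n - 2) → ZMod 2) × Fin 4)) |
        IsFourCycle (gammaGraph (n - 2) (by omega)) C ∧
        s(((0 : Fin (n - 2) → ZMod 2), (0 : Fin 4)), (0, 3)) ∈ C}.ncard = 3 := by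
  rw [setOf_isFourCycle_gammaGraph_and_mem, Set.ncard_eq_three]
  have hsingle : (Pi.single ⟨n - 2 - 2, by omega⟩ 1 : Fin (n - 2) → ZMod 2) ≠
      Pi.single ⟨n - 2 - 1, by omega⟩ 1 :=
    Pi.single_ne_single (by simp [Fin.ext_iff]; omega) one_ne_zero
  -- the three cycles differ in their edge at `(0,0)` other than the one to `(0,3)`
  refine ⟨_, _, _, ?_, ?_, ?_, rfl⟩ <;>
    refine ne_of_mem_of_not_mem' mk_mem_cycleEdges_first ?_ <;>
    simp [cycleEdges, hsingle]
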